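/- arXiv:2402.02955 — 2 statements merged into one kernel-verified Lean document; each statement's English description precedes it below -/
import Mathlib

section
/- For every integer l ≥ 0, the sum over j ∈ ℕ (j ≥ 0, j ≠ l) of 1/((2j+1)² − (2l+1)²) equals 1/(4(2l+1)²). Equivalently, ∑_{j≠l} (1/(j−l) − 1/(j+l+1)) = 1/(2l+1), where the sum runs over j ∈ {0,1,2,…} \ {l}. -/
/-!
With `u j = 1 / (j - l)` (so `u l = 0`, as `1 / 0 = 0`), the summand `1/(j-l) - 1/(j+l+1)` is
`u j - u (j + 2l + 1)`, so the series over all of `ℕ` telescopes to `∑_{j ≤ 2l} u j`, which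
vanishes by the symmetry `j ↦ 2l - j`. The excluded term `j = l` is `-1/(2l+1)`, which gives the
second identity; the first follows from
`1/((2j+1)² - (2l+1)²) = (1/(j-l) - 1/(j+l+1)) / (4(2l+1))`.
-/

open Filter Finset Topology

theorem sum_range_sub_comp_add {G : Type*} [AddCommGroup G] (u : ℕ → G) (m N : ℕ) :
    ∑ n ∈ range N, (u n - u (n + m)) = ∑ i ∈ range m, u i - ∑ i ∈ range m, u (N + i) := by
  have h₁ := sum_range_add u m N
  have h₂ := sum_range_add u N m
  rw [add_comm m N] at h₁
  simp only [sum_sub_distrib, add_comm _ m]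
  rw [sub_eq_sub_iff_add_eq_add, ← h₂, h₁]

theorem hasSum_sub_comp_add_of_tendsto_zero {G : Type*} [AddCommGroup G] [TopologicalSpace G]
    [IsTopologicalAddGroup G] [T2Space G] {u : ℕ → G} (m : ℕ) (hu : Tendsto u atTop (𝓝 0))
    (hs : Summable fun n ↦ u n - u (n + m)) :
    HasSum (fun n ↦ u n - u (n + m)) (∑ i ∈ range m, u i) := by
  rw [hs.hasSum_iff_tendsto_nat]
  simp only [sum_range_sub_comp_add]
  have hshift : Tendsto (fun N ↦ ∑ i ∈ range m, u (N + i)) atTop (𝓝 0) := by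
    simpa using tendsto_finsetSum (range m) fun i _ ↦ hu.comp (tendsto_add_atTop_nat i)
  simpa using tendsto_const_nhds.sub hshift

theorem HasSum.subtype_ne {β G : Type*} [AddCommGroup G] [TopologicalSpace G]
    [IsTopologicalAddGroup G] {f : β → G} {a : G} (hf : HasSum f a) (b : β) :
    HasSum (fun j : {j // j ≠ b} ↦ f j) (a - f b) := by
  have h := (Finset.hasSum_compl_iff (f := f) (a := a - f b) {b}).2 (by simpa using hf)
  exact (Equiv.subtypeEquivRight fun _ ↦ Finset.mem_singleton.not).hasSum_iff.1 h

theorem sum_range_one_div_sub_eq_zero (l : ℕ) :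
    ∑ j ∈ range (2 * l + 1), 1 / ((j : ℝ) - l) = 0 := by
  have hreflect := sum_range_reflect (fun j : ℕ ↦ 1 / ((j : ℝ) - l)) (2 * l + 1)
  have hodd : ∀ j ∈ range (2 * l + 1),
      1 / (((2 * l + 1 - 1 - j : ℕ) : ℝ) - l) = -(1 / ((j : ℝ) - l)) := by
    intro j hj
    rw [Nat.cast_sub (by simpa [Nat.lt_succ_iff] using hj)]
    push_cast
    rw [← div_neg]
    congr 1
    ring
  rw [sum_congr rfl hodd, sum_neg_distrib, neg_eq_iff_eq_neg] at hreflect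
  linarith

theorem summable_one_div_sub_sub_one_div_add (l : ℕ) :
    Summable fun j : ℕ ↦ 1 / ((j : ℝ) - l) - 1 / ((j : ℝ) + l + 1) := by
  rw [← summable_nat_add_iff (l + 1)]
  have hterm : ∀ j : ℕ, 1 / (((j + (l + 1) : ℕ) : ℝ) - l) - 1 / (((j + (l + 1) : ℕ) : ℝ) + l + 1)
      = (2 * l + 1) / ((j + 1) * (j + 2 * l + 2)) := by
    intro j
    have hj₁ : ((j + (l + 1) : ℕ) : ℝ) - l = j + 1 := by push_cast; ring
    have hj₂ : ((j + (l + 1) : ℕ) : ℝ) + l + 1 = j + 2 * l + 2 := by push_cast; ring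
    rw [hj₁, hj₂]
    field_simp
    ring
  have hsq : Summable fun j : ℕ ↦ (2 * l + 1 : ℝ) * (1 / ((j + 1 : ℕ) : ℝ) ^ 2) :=
    ((summable_nat_add_iff 1).2 (Real.summable_one_div_nat_pow.2 one_lt_two)).mul_left _
  simp only [hterm]
  refine Summable.of_nonneg_of_le (fun j ↦ by positivity) (fun j ↦ ?_) hsq
  push_cast
  rw [mul_one_div, div_le_div_iff_of_pos_left (by positivity) (by positivity) (by positivity)]
  nlinarith

theorem hasSum_one_div_sub_sub_one_div_add (l : ℕ) :
    HasSum (fun j : ℕ ↦ 1 / ((j : ℝ) - l) - 1 / ((j : ℝ) + l + 1)) 0 := by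
  have hshift : ∀ j : ℕ, ((j + (2 * l + 1) : ℕ) : ℝ) - l = j + l + 1 := by
    intro j; push_cast; ring
  have hu : Tendsto (fun j : ℕ ↦ 1 / ((j : ℝ) - l)) atTop (𝓝 0) :=
    tendsto_const_nhds.div_atTop (tendsto_atTop_add_const_right _ _ tendsto_natCast_atTop_atTop)
  have h := hasSum_sub_comp_add_of_tendsto_zero (2 * l + 1) hu
    (by simpa only [hshift] using summable_one_div_sub_sub_one_div_add l)
  simpa only [hshift, sum_range_one_div_sub_eq_zero] using h

theorem one_div_sq_sub_sq_eq (j l : ℕ) (h : j ≠ l) :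
    1 / ((2 * (j : ℝ) + 1) ^ 2 - (2 * (l : ℝ) + 1) ^ 2)
      = (1 / ((j : ℝ) - l) - 1 / ((j : ℝ) + l + 1)) / (4 * (2 * l + 1)) := by
  have hjl : (j : ℝ) - l ≠ 0 := sub_ne_zero.2 (Nat.cast_injective.ne h)
  have hsq : (2 * (j : ℝ) + 1) ^ 2 - (2 * (l : ℝ) + 1) ^ 2 = 4 * ((j : ℝ) - l) * (j + l + 1) := by
    ring
  rw [hsq]
  field_simp
  ring

/-- Second-order perturbation sum: ∑_{j≠l} 1/((2j+1)² − (2l+1)²) = 1/(4(2l+1)²),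
equivalently ∑_{j≠l} (1/(j−l) − 1/(j+l+1)) = 1/(2l+1). -/
theorem stmt_3 (l : ℕ) :
    (∑' j : {j : ℕ // j ≠ l},
        (1 : ℝ) / ((2 * (j : ℕ) + 1) ^ 2 - (2 * (l : ℝ) + 1) ^ 2))
      = 1 / (4 * (2 * (l : ℝ) + 1) ^ 2)
    ∧ (∑' j : {j : ℕ // j ≠ l},
        ((1 : ℝ) / ((j : ℕ) - (l : ℝ)) - 1 / ((j : ℕ) + (l : ℝ) + 1)))
      = 1 / (2 * (l : ℝ) + 1) := by
  have hne : HasSum (fun j : {j : ℕ // j ≠ l} ↦ 1 / ((j : ℕ) - (l : ℝ)) - 1 / ((j : ℕ) + (l : ℝ) + 1))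
      (1 / (2 * (l : ℝ) + 1)) := by
    have h := (hasSum_one_div_sub_sub_one_div_add l).subtype_ne l
    rwa [sub_self, div_zero, zero_sub, zero_sub, neg_neg, ← two_mul] at h
  refine ⟨?_, hne.tsum_eq⟩
  convert (hne.div_const (4 * (2 * l + 1))).tsum_eq using 1
  · exact tsum_congr fun j ↦ one_div_sq_sub_sq_eq j l j.2
  · field_simp
end

section
/- Let h₀ be a nonnegative closed Hermitian sesquilinear form on a dense domain H⁺ ⊂ H, and h₁ a Hermitian form on H⁺ with |h₁(Φ,Φ)| ≤ a h₀(Φ,Φ) + b‖Φ‖² where a < 1. Then for every u ∈ [0, 1/a): (i) the form h₀ + u h₁ is bounded below by −ub on H⁺, i.e., h₀(Φ,Φ) + u h₁(Φ,Φ) ≥ −ub‖Φ‖² whenever ua < 1; and (ii) the norm Φ ↦ √(h₀(Φ,Φ) + u h₁(Φ,Φ) + (ub+1)‖Φ‖²) is equivalent to ‖Φ‖₊ = √(h₀(Φ,Φ) + ‖Φ‖²), with equivalence constants depending only on ua and ub. -/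
open Complex

/-- Quantitative KLMN: for u ∈ [0,1/a), the form h₀ + u h₁ is bounded below by
−ub, and the norm it induces (shifted by ub+1) is equivalent to ‖·‖₊. -/
theorem stmt_19 {H : Type*} [NormedAddCommGroup H] [InnerProductSpace ℂ H]
    (Hp : Submodule ℂ H) (hdense : Dense (Hp : Set H))
    (h₀ h₁ : Hp → Hp → ℂ)
    -- h₀ is a nonnegative Hermitian form
    (h0herm : ∀ Ψ Φ : Hp, h₀ Ψ Φ = starRingEnd ℂ (h₀ Φ Ψ))
    (h0nonneg : ∀ Φ : Hp, 0 ≤ (h₀ Φ Φ).re)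
    -- the form norm ‖Φ‖₊² = h₀(Φ,Φ) + ‖Φ‖²
    (np : Hp → ℝ) (hnp : ∀ Φ : Hp, np Φ = Real.sqrt ((h₀ Φ Φ).re + ‖(Φ : H)‖ ^ 2))
    -- h₀ is closed: H⁺ is complete with respect to ‖·‖₊
    (hclosed : ∀ f : ℕ → Hp,
      (∀ ε > 0, ∃ N : ℕ, ∀ p ≥ N, ∀ q ≥ N, np (f p - f q) < ε) →
      ∃ g : Hp, ∀ ε > 0, ∃ N : ℕ, ∀ p ≥ N, np (f p - g) < ε)
    -- h₁ is Hermitian and relatively bounded with bound a < 1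
    (h1herm : ∀ Ψ Φ : Hp, h₁ Ψ Φ = starRingEnd ℂ (h₁ Φ Ψ))
    (a b : ℝ) (ha0 : 0 ≤ a) (ha1 : a < 1) (hb : 0 ≤ b)
    (hbound : ∀ Φ : Hp, ‖h₁ Φ Φ‖ ≤ a * (h₀ Φ Φ).re + b * ‖(Φ : H)‖ ^ 2) :
    ∀ u : ℝ, 0 ≤ u → u * a < 1 →
      -- (i) lower bound
      (∀ Φ : Hp, -(u * b) * ‖(Φ : H)‖ ^ 2 ≤ (h₀ Φ Φ).re + u * (h₁ Φ Φ).re)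
      -- (ii) equivalence of norms, with constants depending only on ua and ub
      ∧ ∃ c C : ℝ, 0 < c ∧ 0 < C ∧
          -- c and C depend only on u*a and u*b
          ∀ Φ : Hp,
            c * np Φ ≤ Real.sqrt ((h₀ Φ Φ).re + u * (h₁ Φ Φ).re
                + (u * b + 1) * ‖(Φ : H)‖ ^ 2)
            ∧ Real.sqrt ((h₀ Φ Φ).re + u * (h₁ Φ Φ).re
                + (u * b + 1) * ‖(Φ : H)‖ ^ 2) ≤ C * np Φ := by

  intro u hu hua
  have key : ∀ Φ : Hp, |(h₁ Φ Φ).re| ≤ a * (h₀ Φ Φ).re + b * ‖(Φ : H)‖ ^ 2 := by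
    intro Φ
    exact le_trans (Complex.abs_re_le_norm _) (hbound Φ)
  constructor
  · intro Φ
    have h1 := abs_le.mp (key Φ)
    have hQ := h0nonneg Φ
    have hN : (0:ℝ) ≤ ‖(Φ : H)‖ ^ 2 := sq_nonneg _
    nlinarith [mul_le_mul_of_nonneg_left h1.1 hu]
  · refine ⟨Real.sqrt (1 - u * a), Real.sqrt (1 + u * a + 2 * (u * b)),
      Real.sqrt_pos.mpr (by linarith), Real.sqrt_pos.mpr (by nlinarith), ?_⟩
    intro Φ
    have h1 := abs_le.mp (key Φ)
    have hQ : 0 ≤ (h₀ Φ Φ).re := h0nonneg Φ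
    have hN : (0:ℝ) ≤ ‖(Φ : H)‖ ^ 2 := sq_nonneg _
    have hlo := mul_le_mul_of_nonneg_left h1.1 hu
    have hhi := mul_le_mul_of_nonneg_left h1.2 hu
    have huaQ : 0 ≤ u * a * (h₀ Φ Φ).re := by positivity
    have huaN : 0 ≤ u * a * ‖(Φ : H)‖ ^ 2 := by positivity
    have hubQ : 0 ≤ u * b * (h₀ Φ Φ).re := by positivity
    have hubN : 0 ≤ u * b * ‖(Φ : H)‖ ^ 2 := by positivity
    rw [hnp Φ]
    constructor
    · rw [← Real.sqrt_mul (by linarith)]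
      apply Real.sqrt_le_sqrt
      nlinarith
    · rw [← Real.sqrt_mul (by nlinarith)]
      apply Real.sqrt_le_sqrt
      nlinarith
end
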